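/- Every non-recursive context-free game that has a dominant one-pass strategy has a strongly regular dominant one-pass strategy. -/

import Mathlib

namespace CFG

/-- Juliet's two kinds of moves. -/
inductive JMove : Type
  | call : JMove
  | read : JMove
deriving DecidableEq

/-- The extended alphabet Σ̂: `Sum.inl a` is the plain symbol `a`,
`Sum.inr a` is the "called" copy `â`. -/
abbrev HSym (A : Type) : Type := A ⊕ A

/-- The homomorphism ♮ deleting called symbols. -/
def flat {A : Type} (α : List (HSym A)) : List A :=
  α.filterMap (fun x => match x with | Sum.inl a => some a | Sum.inr _ => none)

/-- A context-free game: a (minimal) DFA `T` over `A` with finite state set `Q`,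
and a replacement relation `R` with nonempty replacement words and regular
replacement languages. -/
structure CFGame (A : Type) where
  Q : Type
  fintypeQ : Fintype Q
  T : DFA A Q
  minimal_reachable : ∀ q : Q, ∃ w : List A, T.evalFrom T.start w = q
  minimal_distinguishable :
    ∀ q q' : Q, (∀ w : List A, T.evalFrom q w ∈ T.accept ↔ T.evalFrom q' w ∈ T.accept) → q = q'
  R : A → List A → Prop
  R_ne : ∀ a v, R a v → v ≠ []
  R_regular : ∀ a, Language.IsRegular {v : List A | R a v}

variable {A : Type}

/-- `a` is a function symbol (its replacement language is nonempty). -/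
def CFGame.Fn (G : CFGame A) (a : A) : Prop := ∃ v, G.R a v

/-- One-pass strategies of Juliet (values at non-function symbols are irrelevant). -/
abbrev JStrat (A : Type) : Type := List (HSym A) → A → JMove

/-- Strategies of Romeo (values at non-function symbols are irrelevant). -/
abbrev RStrat (A : Type) : Type := List (HSym A) → A → List A

/-- Validity of a Romeo strategy: replacement words belong to the replacement language. -/
def CFGame.RValid (G : CFGame A) (τ : RStrat A) : Prop :=
  ∀ (α : List (HSym A)) (a : A), G.Fn a → G.R a (τ α a)

/-- Configurations, instrumented for depth bookkeeping: a history string, the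
remaining string where every symbol is annotated with its call-nesting level,
and the maximal nesting depth of the `Call` moves played so far. -/
abbrev Config (A : Type) : Type := List (HSym A) × List (A × ℕ) × ℕ

/-- One step of a play: Juliet reads or calls the current symbol according to `σ`
(a call is only possible at a function symbol); a call is answered by `τ`. -/
noncomputable def CFGame.step (G : CFGame A) (σ : JStrat A) (τ : RStrat A) :
    Config A → Config A :=
  fun c =>
    match c with
    | (α, [], d) => (α, [], d)
    | (α, (a, k) :: v, d) =>
      letI := Classical.propDecidable (G.Fn a ∧ σ α a = JMove.call)
      if G.Fn a ∧ σ α a = JMove.call then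
        (α ++ [Sum.inr a], (τ α a).map (fun b => (b, k + 1)) ++ v, max d (k + 1))
      else (α ++ [Sum.inl a], v, d)

/-- The play of `σ` against `τ` on input word `w`, as the sequence of its
configurations (the configuration stays fixed once the remaining string is empty). -/
noncomputable def CFGame.play (G : CFGame A) (σ : JStrat A) (τ : RStrat A)
    (w : List A) (n : ℕ) : Config A :=
  (G.step σ τ)^[n] ([], w.map (fun a => (a, 0)), 0)

/-- `σ` wins on `w`: against every (valid) Romeo strategy, the play on `w` is
finite and its final string belongs to the target language. -/
def CFGame.WinsOn (G : CFGame A) (σ : JStrat A) (w : List A) : Prop :=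
  ∀ τ : RStrat A, G.RValid τ →
    ∃ n : ℕ, (G.play σ τ w n).2.1 = [] ∧
      G.T.evalFrom G.T.start (flat (G.play σ τ w n).1) ∈ G.T.accept

/-- The winning set `W(σ)`. -/
def CFGame.W (G : CFGame A) (σ : JStrat A) : Set (List A) := {w | G.WinsOn σ w}

/-- `σ` is terminating: every play of `σ` is finite. -/
def CFGame.Terminating (G : CFGame A) (σ : JStrat A) : Prop :=
  ∀ τ : RStrat A, G.RValid τ → ∀ w : List A, ∃ n : ℕ, (G.play σ τ w n).2.1 = []

/-- `σ` is dominant: it dominates every one-pass strategy. -/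
def CFGame.Dominant (G : CFGame A) (σ : JStrat A) : Prop :=
  ∀ σ' : JStrat A, G.W σ' ⊆ G.W σ

/-- `σ` is undominated: no one-pass strategy strictly dominates it. -/
def CFGame.Undominated (G : CFGame A) (σ : JStrat A) : Prop :=
  ¬ ∃ σ' : JStrat A, G.W σ ⊂ G.W σ'

/-- `σ` is forgetful: its decisions only depend on `♮α` and the current symbol. -/
def CFGame.Forgetful (G : CFGame A) (σ : JStrat A) : Prop :=
  ∀ (α β : List (HSym A)) (a : A), G.Fn a → flat α = flat β → σ α a = σ β a

/-- `σ` is regular: the language `{αa : σ(α,a) = Call}` over Σ̂ is regular. -/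
def CFGame.RegularStrat (G : CFGame A) (σ : JStrat A) : Prop :=
  Language.IsRegular
    {x : List (HSym A) | ∃ (α : List (HSym A)) (a : A),
      G.Fn a ∧ σ α a = JMove.call ∧ x = α ++ [Sum.inl a]}

/-- One step of a strategy automaton of a strongly regular strategy, on the state
set `Q ∪ {Call}` (`none` is the absorbing state `Call`). -/
def optStep {Q : Type} (δA : Q → A → Option Q) (o : Option Q) (a : A) : Option Q :=
  o.bind (fun q => δA q a)

/-- `σ` is strongly regular: given by an automaton obtained from `T` by rerouting
some transitions to a new accepting state `Call`; Juliet plays `Call` on `(α,a)`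
iff the automaton maps `♮α·a` to `Call`. -/
def CFGame.StronglyRegular (G : CFGame A) (σ : JStrat A) : Prop :=
  ∃ δA : G.Q → A → Option G.Q,
    (∀ q a, δA q a = some (G.T.step q a) ∨ δA q a = none) ∧
    ∀ (α : List (HSym A)) (a : A), G.Fn a →
      (σ α a = JMove.call ↔
        List.foldl (optStep δA) (some G.T.start) (flat α ++ [a]) = none)

/-- Shortlex (strict) order on words. -/
def shortLex [LinearOrder A] (v w : List A) : Prop :=
  v.length < w.length ∨ (v.length = w.length ∧ List.Lex (· < ·) v w)

/-- `V <_sl W` for sets of words: the shortlex-least word of the symmetric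
difference belongs to `W`. -/
def slLT [LinearOrder A] (V W : Set (List A)) : Prop :=
  ∃ w : List A, w ∈ W ∧ w ∉ V ∧ ∀ v : List A, shortLex v w → (v ∈ V ↔ v ∈ W)

/-- `V ≤_sl W` for sets of words. -/
def slLE [LinearOrder A] (V W : Set (List A)) : Prop := V = W ∨ slLT V W

/-- `σ` is weakly dominant: `W(σ') ≤_sl W(σ)` for every one-pass strategy `σ'`. -/
def CFGame.WeaklyDominant [LinearOrder A] (G : CFGame A) (σ : JStrat A) : Prop :=
  ∀ σ' : JStrat A, slLE (G.W σ') (G.W σ)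

/-- The bounded depth property. -/
def CFGame.BoundedDepthProperty (G : CFGame A) : Prop :=
  ∃ B : ℕ → ℕ, ∀ σ : JStrat A, ∀ k : ℕ, ∃ σk : JStrat A,
    ∀ w ∈ G.W σ, w.length ≤ k →
      G.WinsOn σk w ∧
      ∀ τ : RStrat A, G.RValid τ → ∀ n : ℕ, (G.play σk τ w n).2.2 ≤ B w.length

/-- Prefix-freeness of all replacement languages. -/
def CFGame.PrefixFree (G : CFGame A) : Prop :=
  ∀ (a : A) (u v : List A), G.R a u → G.R a v → u <+: v → u = v

/-- Non-recursiveness: no function symbol can be derived from itself. -/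
def CFGame.NonRecursive (G : CFGame A) : Prop :=
  ¬ ∃ (n : ℕ) (f : ℕ → A), 1 ≤ n ∧ f 0 = f n ∧ (∀ i ≤ n, G.Fn (f i)) ∧
    ∀ k < n, ∃ v : List A, G.R (f k) v ∧ f (k + 1) ∈ v

/-- `σ` is almost undominated: only finitely many words are lost by `σ` but won
by some strategy dominating `σ`. -/
def CFGame.AlmostUndominated (G : CFGame A) (σ : JStrat A) : Prop :=
  Set.Finite {w : List A | ¬ G.WinsOn σ w ∧
    ∃ σ' : JStrat A, G.W σ ⊆ G.W σ' ∧ G.WinsOn σ' w}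

/-- Convergence of a sequence of one-pass strategies. -/
def Converges (G : CFGame A) (σs : ℕ → JStrat A) (σ : JStrat A) : Prop :=
  ∀ n : ℕ, ∃ k0 : ℕ, ∀ k ≥ k0, ∀ α : List (HSym A), α.length ≤ n →
    ∀ a : A, G.Fn a → σ α a = σs k α a

/-- The one-pass strategy defined by a DFA `M` over Σ̂ (a strategy automaton):
play `Call` on `(α,a)` iff `M` accepts `α·a`. -/
noncomputable def autoStrat {S : Type} (M : DFA (HSym A) S) : JStrat A :=
  fun α a =>
    letI := Classical.propDecidable (M.eval (α ++ [Sum.inl a]) ∈ M.accept)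
    if M.eval (α ++ [Sum.inl a]) ∈ M.accept then JMove.call else JMove.read

/-- `States(q; w, σ)`: the `T`-states `δ*(q, ♮α)` over final history strings `α`
of plays of `σ` on `w`. -/
def CFGame.StatesOf (G : CFGame A) (σ : JStrat A) (q : G.Q) (w : List A) : Set G.Q :=
  {q' | ∃ τ : RStrat A, G.RValid τ ∧ ∃ n : ℕ,
    (G.play σ τ w n).2.1 = [] ∧ G.T.evalFrom q (flat (G.play σ τ w n).1) = q'}

/-- `(p, a, S)` is an effect triple of `σ`. -/
def CFGame.IsEffectTriple (G : CFGame A) (σ : JStrat A) (t : G.Q × A × Set G.Q) : Prop :=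
  G.StatesOf σ t.1 [t.2.1] ⊆ t.2.2

/-- An effect triple is trivial if `δ(p,a) ∈ S`. -/
def CFGame.TrivialTriple (G : CFGame A) (t : G.Q × A × Set G.Q) : Prop :=
  G.T.step t.1 t.2.1 ∈ t.2.2

/-- The substrategy `σ^α`. -/
def subStrat (σ : JStrat A) (α : List (HSym A)) : JStrat A :=
  fun β a => σ (α ++ β) a

/-- The effect set `E(σ)`: all effect triples of all substrategies of `σ`. -/
def CFGame.EffectSet (G : CFGame A) (σ : JStrat A) : Set (G.Q × A × Set G.Q) :=
  {t | ∃ α : List (HSym A), G.IsEffectTriple (subStrat σ α) t}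

/-- The transition relation of the NFA `N_E` associated with a set `E` of effect
triples (state set `P(Q)`, initial state `{s}`, accepting states the subsets of `F`). -/
def CFGame.NEStep (G : CFGame A) (E : Set (G.Q × A × Set G.Q))
    (S : Set G.Q) (a : A) (S' : Set G.Q) : Prop :=
  ∀ p ∈ S, ∃ S'' : Set G.Q, S'' ⊆ S' ∧ (p, a, S'') ∈ E

/-- A strategy for the online word problem `OnlineNFA(N_E)`. -/
def CFGame.NEOnlineStrat (G : CFGame A) (E : Set (G.Q × A × Set G.Q))
    (ρ : List A → Set G.Q) : Prop :=
  ρ [] = {G.T.start} ∧ ∀ (w : List A) (a : A), G.NEStep E (ρ w) a (ρ (w ++ [a]))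

/-- The winning set of a strategy for `OnlineNFA(N_E)`. -/
def CFGame.NEWins (G : CFGame A) (ρ : List A → Set G.Q) : Set (List A) :=
  {w | ρ w ⊆ G.T.accept}

/-- A strategy automaton `M` is `(p,a,St)`-inducing. -/
def CFGame.Inducing (G : CFGame A) {S : Type} (M : DFA (HSym A) S)
    (p : G.Q) (a : A) (St : Set G.Q) : Prop :=
  G.Terminating (autoStrat M) ∧ G.Fn a ∧
  (∀ u : List A, G.R a u → G.StatesOf (autoStrat M) p u ⊆ St) ∧
  ∃ QA : G.Q → Set S,
    (∀ q ∈ St, ∀ q' ∈ St, q ≠ q' → Disjoint (QA q) (QA q')) ∧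
    ∀ u : List A, G.R a u → ∀ τ : RStrat A, G.RValid τ → ∀ n : ℕ,
      (G.play (autoStrat M) τ u n).2.1 = [] →
      ((∀ q ∈ St,
          (M.eval (G.play (autoStrat M) τ u n).1 ∈ QA q ↔
            G.T.evalFrom p (flat (G.play (autoStrat M) τ u n).1) = q)) ∧
        ∀ β : List (HSym A), β <+: (G.play (autoStrat M) τ u n).1 →
          β ≠ (G.play (autoStrat M) τ u n).1 → ∀ r ∈ St, M.eval β ∉ QA r)

/-!
Calling `b` in state `q` of `T` is safe if it never turns a winnable remaining input `b z` into
a lost one. A dominant strategy `σd` that has only read so far makes only safe calls: a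
reply to an unsafe call would make it lose a winnable input. Hence, as long as no safe call has
been passed, reading the current symbol keeps the remaining input winnable, since `σd` wins the
whole input and reads that symbol. The strongly regular strategy runs `T` and calls exactly the
safe calls, so along its plays the remaining input stays winnable; the plays end because a call
replaces a symbol by symbols of smaller rank in the derivation order, which is well founded
since the game is non-recursive.
-/

def subRStrat (τ : RStrat A) (α : List (HSym A)) : RStrat A :=
  fun β a => τ (α ++ β) a

lemma _root_.Multiset.isDershowitzMannaLT_add_cons {α : Type*} [Preorder α]
    {M N : Multiset α} {o : α} (h : ∀ p ∈ N, p < o) :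
    Multiset.IsDershowitzMannaLT (N + M) (o ::ₘ M) :=
  ⟨M, N, {o}, Multiset.singleton_ne_zero o, add_comm N M,
    (Multiset.singleton_add o M).symm.trans (add_comm _ _),
    fun p hp => ⟨o, Multiset.mem_singleton_self o, h p hp⟩⟩

@[simp]
lemma flat_nil : flat ([] : List (HSym A)) = [] := rfl

@[simp]
lemma flat_cons_inl (a : A) (α : List (HSym A)) : flat (Sum.inl a :: α) = a :: flat α := rfl

@[simp]
lemma flat_cons_inr (a : A) (α : List (HSym A)) : flat (Sum.inr a :: α) = flat α := rfl

@[simp]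
lemma flat_append (α β : List (HSym A)) : flat (α ++ β) = flat α ++ flat β :=
  List.filterMap_append

@[simp]
lemma flat_map_inl (u : List A) : flat (u.map Sum.inl) = u := by
  induction u <;> simp_all

lemma subStrat_append (σ : JStrat A) (α β : List (HSym A)) :
    subStrat σ (α ++ β) = subStrat (subStrat σ α) β := by
  funext γ a
  simp [subStrat]

namespace CFGame

variable {G : CFGame A}

lemma exists_rValid (G : CFGame A) : ∃ τ : RStrat A, G.RValid τ := by
  classical
  exact ⟨fun _ a => if h : G.Fn a then h.choose else [], fun _ a ha => by
    simpa [dif_pos ha] using ha.choose_spec⟩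

open Classical in
/-- `CFGame.step` without the nesting annotations and the depth counter. -/
noncomputable def plainStep (G : CFGame A) (σ : JStrat A) (τ : RStrat A) :
    List (HSym A) × List A → List (HSym A) × List A
  | (α, []) => (α, [])
  | (α, a :: v) =>
    if G.Fn a ∧ σ α a = JMove.call then (α ++ [Sum.inr a], τ α a ++ v)
    else (α ++ [Sum.inl a], v)

lemma plainStep_cons_of_call {σ : JStrat A} {τ : RStrat A} {α : List (HSym A)} {a : A}
    (v : List A) (h : G.Fn a ∧ σ α a = JMove.call) :
    G.plainStep σ τ (α, a :: v) = (α ++ [Sum.inr a], τ α a ++ v) := by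
  simp [plainStep, h]

lemma plainStep_cons_of_read {σ : JStrat A} {τ : RStrat A} {α : List (HSym A)} {a : A}
    (v : List A) (h : ¬ (G.Fn a ∧ σ α a = JMove.call)) :
    G.plainStep σ τ (α, a :: v) = (α ++ [Sum.inl a], v) := by
  simp only [plainStep, if_neg h]

lemma semiconj_erase_step (σ : JStrat A) (τ : RStrat A) :
    Function.Semiconj (fun c : Config A => (c.1, c.2.1.map Prod.fst))
      (G.step σ τ) (G.plainStep σ τ) := by
  rintro ⟨α, _ | ⟨⟨a, k⟩, v⟩, d⟩
  · rfl
  · by_cases h : G.Fn a ∧ σ α a = JMove.call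
    · simp [step, plainStep_cons_of_call _ h, h, Function.comp_def]
    · simp [step, plainStep_cons_of_read _ h, h]

lemma semiconj_append_plainStep (σ : JStrat A) (τ : RStrat A) (α : List (HSym A)) :
    Function.Semiconj (Prod.map (α ++ ·) id)
      (G.plainStep (subStrat σ α) (subRStrat τ α)) (G.plainStep σ τ) := by
  rintro ⟨β, _ | ⟨a, v⟩⟩
  · rfl
  · by_cases h : G.Fn a ∧ σ (α ++ β) a = JMove.call
    · simp [plainStep_cons_of_call _ h, plainStep_cons_of_call (σ := subStrat σ α) _ h,
        subRStrat]
    · simp [plainStep_cons_of_read _ h, plainStep_cons_of_read (σ := subStrat σ α) _ h]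

def PlayEndsIn (G : CFGame A) (σ : JStrat A) (τ : RStrat A) (w : List A)
    (P : List (HSym A) → Prop) : Prop :=
  ∃ n : ℕ, ((G.plainStep σ τ)^[n] ([], w)).2 = [] ∧ P ((G.plainStep σ τ)^[n] ([], w)).1

def Forces (G : CFGame A) (σ : JStrat A) (w : List A) (P : List (HSym A) → Prop) : Prop :=
  ∀ τ : RStrat A, G.RValid τ → G.PlayEndsIn σ τ w P

lemma playEndsIn_nil {σ : JStrat A} {τ : RStrat A} {P : List (HSym A) → Prop} :
    G.PlayEndsIn σ τ [] P ↔ P [] := by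
  have hfix : ∀ n, (G.plainStep σ τ)^[n] ([], []) = ([], []) :=
    Function.iterate_fixed rfl
  simp [PlayEndsIn, hfix]

lemma playEndsIn_cons_iff {σ : JStrat A} {τ : RStrat A} {a : A} {c : HSym A} {r r' : List A}
    {P : List (HSym A) → Prop} (h : G.plainStep σ τ ([], a :: r) = ([c], r')) :
    G.PlayEndsIn σ τ (a :: r) P ↔
      G.PlayEndsIn (subStrat σ [c]) (subRStrat τ [c]) r' (fun β => P (c :: β)) := by
  have hsucc : ∀ m, (G.plainStep σ τ)^[m + 1] ([], a :: r) =
      Prod.map ([c] ++ ·) id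
        ((G.plainStep (subStrat σ [c]) (subRStrat τ [c]))^[m] ([], r')) := by
    intro m
    rw [Function.iterate_succ_apply, h,
      (semiconj_append_plainStep σ τ [c]).iterate_right m ([], r')]
    rfl
  constructor
  · rintro ⟨_ | m, hend, hP⟩
    · simp at hend
    · rw [hsucc] at hend hP
      exact ⟨m, hend, hP⟩
  · rintro ⟨m, hend, hP⟩
    exact ⟨m + 1, by rw [hsucc]; exact hend, by rw [hsucc]; exact hP⟩

lemma forces_nil {σ : JStrat A} {P : List (HSym A) → Prop} : G.Forces σ [] P ↔ P [] := by
  obtain ⟨τ, hτ⟩ := G.exists_rValid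
  exact ⟨fun h => playEndsIn_nil.mp (h τ hτ), fun h _ _ => playEndsIn_nil.mpr h⟩

lemma forces_cons_of_read {σ : JStrat A} {a : A} {r : List A} {P : List (HSym A) → Prop}
    (h : ¬ (G.Fn a ∧ σ [] a = JMove.call)) :
    G.Forces σ (a :: r) P ↔
      G.Forces (subStrat σ [Sum.inl a]) r (fun β => P (Sum.inl a :: β)) := by
  have hstep : ∀ τ : RStrat A, G.plainStep σ τ ([], a :: r) = ([Sum.inl a], r) :=
    fun τ => plainStep_cons_of_read r h
  refine ⟨fun hw τ hτ => ?_, fun hw τ hτ => ?_⟩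
  · exact (playEndsIn_cons_iff (hstep fun β => τ β.tail)).mp (hw _ fun β => hτ β.tail)
  · exact (playEndsIn_cons_iff (hstep τ)).mpr (hw _ fun β => hτ _)

lemma forces_cons_of_call {σ : JStrat A} {a : A} {r : List A} {P : List (HSym A) → Prop}
    (ha : G.Fn a) (h : σ [] a = JMove.call) :
    G.Forces σ (a :: r) P ↔ ∀ x, G.R a x →
      G.Forces (subStrat σ [Sum.inr a]) (x ++ r) (fun β => P (Sum.inr a :: β)) := by
  classical
  refine ⟨fun hw x hx τ hτ => ?_, fun hw τ hτ => ?_⟩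
  · let τx : RStrat A := fun β b => if β = [] ∧ b = a then x else τ β.tail b
    have hτx : G.RValid τx := fun β b hb => by
      by_cases hβ : β = [] ∧ b = a
      · simpa [τx, hβ, hβ.2] using hx
      · simpa [τx, hβ] using hτ β.tail b hb
    have hshift : subRStrat τx [Sum.inr a] = τ := by
      funext β b
      simp [subRStrat, τx]
    have := (playEndsIn_cons_iff (plainStep_cons_of_call r ⟨ha, h⟩)).mp (hw τx hτx)
    simpa [hshift, τx] using this
  · exact (playEndsIn_cons_iff (plainStep_cons_of_call r ⟨ha, h⟩)).mpr
      (hw _ (hτ [] a ha) _ fun β => hτ _)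

def WinsFrom (G : CFGame A) (q : G.Q) (σ : JStrat A) (w : List A) : Prop :=
  G.Forces σ w (fun α => G.T.evalFrom q (flat α) ∈ G.T.accept)

lemma winsOn_iff_winsFrom {σ : JStrat A} {w : List A} :
    G.WinsOn σ w ↔ G.WinsFrom G.T.start σ w := by
  refine forall₂_congr fun τ _ => exists_congr fun n => ?_
  have := (semiconj_erase_step (G := G) σ τ).iterate_right n ([], w.map (·, 0), 0)
  simp only [Function.comp_def, List.map_map, List.map_id'] at this
  simp [play, ← this]

def ReadsThrough (G : CFGame A) : JStrat A → List A → Prop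
  | _, [] => True
  | σ, a :: u =>
    ¬ (G.Fn a ∧ σ [] a = JMove.call) ∧ G.ReadsThrough (subStrat σ [Sum.inl a]) u

lemma readsThrough_append {σ : JStrat A} {u v : List A} :
    G.ReadsThrough σ (u ++ v) ↔
      G.ReadsThrough σ u ∧ G.ReadsThrough (subStrat σ (u.map Sum.inl)) v := by
  induction u generalizing σ with
  | nil => exact (iff_of_eq (true_and _)).symm
  | cons a u ih =>
    simp only [List.cons_append, ReadsThrough, ih, and_assoc]
    rfl

lemma forces_append_of_readsThrough {σ : JStrat A} {u w : List A}
    {P : List (HSym A) → Prop} (hu : G.ReadsThrough σ u) :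
    G.Forces σ (u ++ w) P ↔
      G.Forces (subStrat σ (u.map Sum.inl)) w (fun β => P (u.map Sum.inl ++ β)) := by
  induction u generalizing σ P with
  | nil => rfl
  | cons a u ih =>
    rw [List.cons_append, forces_cons_of_read hu.1, ih hu.2]
    rfl

def Winnable (G : CFGame A) (q : G.Q) (w : List A) : Prop :=
  ∃ σ : JStrat A, G.WinsFrom q σ w

lemma mem_accept_of_winnable_nil {q : G.Q} (h : G.Winnable q []) : q ∈ G.T.accept := by
  obtain ⟨σ, hσ⟩ := h
  exact forces_nil.mp hσ

lemma winnable_cons {q : G.Q} {a : A} {w : List A} (h : G.Winnable (G.T.step q a) w) :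
    G.Winnable q (a :: w) := by
  obtain ⟨ρ, hρ⟩ := h
  let σ : JStrat A := fun α b => match α with
    | [] => JMove.read
    | _ :: α' => ρ α' b
  exact ⟨σ, (forces_cons_of_read (by simp [σ])).mpr hρ⟩

lemma winnable_append {q : G.Q} {u v : List A} (h : G.Winnable (G.T.evalFrom q u) v) :
    G.Winnable q (u ++ v) := by
  induction u generalizing q with
  | nil => exact h
  | cons a u ih => exact winnable_cons (ih h)

lemma Dominant.winsFrom {σ : JStrat A} (hσ : G.Dominant σ) {w : List A}
    (hw : G.Winnable G.T.start w) : G.WinsFrom G.T.start σ w := by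
  obtain ⟨σ', hσ'⟩ := hw
  exact winsOn_iff_winsFrom.mp (hσ σ' (winsOn_iff_winsFrom.mpr hσ'))

def CallSafe (G : CFGame A) (q : G.Q) (b : A) : Prop :=
  G.Fn b ∧ ∀ z x, G.Winnable q (b :: z) → G.R b x → G.Winnable q (x ++ z)

def NoSafeCall (G : CFGame A) : G.Q → List A → Prop
  | _, [] => True
  | q, a :: y => ¬ G.CallSafe q a ∧ G.NoSafeCall (G.T.step q a) y

lemma noSafeCall_append {q : G.Q} {u v : List A} :
    G.NoSafeCall q (u ++ v) ↔ G.NoSafeCall q u ∧ G.NoSafeCall (G.T.evalFrom q u) v := by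
  induction u generalizing q with
  | nil => exact (iff_of_eq (true_and _)).symm
  | cons a u ih => simp only [List.cons_append, NoSafeCall, ih, and_assoc, DFA.evalFrom_cons]

lemma noSafeCall_append_singleton {q : G.Q} {y : List A} {a : A} :
    G.NoSafeCall q (y ++ [a]) ↔ G.NoSafeCall q y ∧ ¬ G.CallSafe (G.T.evalFrom q y) a := by
  simp [noSafeCall_append, NoSafeCall]

variable {σd : JStrat A}

/-- Otherwise Romeo's reply `x` would make `σd` lose the winnable input `u ++ b :: z`. -/
lemma Dominant.callSafe (hd : G.Dominant σd) {u : List A} (hu : G.ReadsThrough σd u) {b : A}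
    (hb : G.Fn b) (hcall : σd (u.map Sum.inl) b = JMove.call) :
    G.CallSafe (G.T.evalFrom G.T.start u) b := by
  refine ⟨hb, fun z x hwin hx => ⟨subStrat (subStrat σd (u.map Sum.inl)) [Sum.inr b], ?_⟩⟩
  have hσd := hd.winsFrom (winnable_append hwin)
  rw [WinsFrom, forces_append_of_readsThrough hu,
    forces_cons_of_call hb (by simpa [subStrat] using hcall)] at hσd
  simpa [WinsFrom, DFA.evalFrom_of_append] using hσd x hx

lemma Dominant.readsThrough (hd : G.Dominant σd) {y : List A}
    (hy : G.NoSafeCall G.T.start y) : G.ReadsThrough σd y := by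
  induction y using List.reverseRecOn with
  | nil => trivial
  | append_singleton y a ih =>
    obtain ⟨hy, ha⟩ := noSafeCall_append_singleton.mp hy
    refine readsThrough_append.mpr ⟨ih hy, fun ⟨hb, hcall⟩ => ha ?_, trivial⟩
    exact hd.callSafe (ih hy) hb (by simpa [subStrat] using hcall)

/-- `σd` wins `y ++ a :: r` and, by `Dominant.callSafe`, reads `y ++ [a]` on the way. -/
lemma Dominant.winnable_of_not_callSafe (hd : G.Dominant σd) {y : List A} {a : A}
    {r : List A} (hy : G.NoSafeCall G.T.start y)
    (ha : ¬ G.CallSafe (G.T.evalFrom G.T.start y) a)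
    (hw : G.Winnable (G.T.evalFrom G.T.start y) (a :: r)) :
    G.Winnable (G.T.evalFrom G.T.start (y ++ [a])) r := by
  have hread := hd.readsThrough (noSafeCall_append_singleton.mpr ⟨hy, ha⟩)
  have hσd := hd.winsFrom (winnable_append hw)
  rw [← List.singleton_append, ← List.append_assoc, WinsFrom,
    forces_append_of_readsThrough hread] at hσd
  exact ⟨subStrat σd ((y ++ [a]).map Sum.inl), by
    simpa [WinsFrom, DFA.evalFrom_of_append] using hσd⟩

def Derives (G : CFGame A) (b c : A) : Prop := ∃ v, G.R b v ∧ c ∈ v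

/-- On a finite alphabet an infinite derivation chain revisits a symbol. -/
lemma NonRecursive.wellFounded [Finite A] (hnr : G.NonRecursive) :
    WellFounded (flip G.Derives) := by
  refine ⟨fun a => by_contra fun ha => ?_⟩
  obtain ⟨f, -, hf⟩ := not_acc_iff_exists_descending_chain.mp ha
  obtain ⟨i, j, hij, hfij⟩ := Finite.exists_ne_map_eq_of_infinite f
  wlog hlt : i < j generalizing i j
  · exact this j i hij.symm hfij.symm (by omega)
  refine hnr ⟨j - i, fun k => f (i + k), by omega, by simp [hfij, Nat.add_sub_cancel' hlt.le],
    fun k _ => ?_, fun k _ => hf (i + k)⟩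
  obtain ⟨v, hv, -⟩ := hf (i + k)
  exact ⟨v, hv⟩

/-- Induction along plays of a non-recursive game: a call replaces the first symbol by symbols
of smaller rank, so the multisets of ranks of the remaining inputs decrease in the
Dershowitz–Manna order. -/
theorem NonRecursive.induction [Finite A] (hnr : G.NonRecursive) {motive : List A → Prop}
    (nil : motive [])
    (cons : ∀ a r, motive r → (∀ x, G.R a x → motive (x ++ r)) → motive (a :: r))
    (w : List A) : motive w := by
  let rank (a : A) : Ordinal := (hnr.wellFounded.apply a).rank
  have hrank : ∀ a x, G.R a x → ∀ c ∈ x, rank c < rank a :=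
    fun a x hx c hc => Acc.rank_lt_of_rel _ ⟨x, hx, hc⟩
  refine (InvImage.wf (fun w : List A => (w.map rank : Multiset Ordinal))
    Multiset.wellFounded_isDershowitzMannaLT).induction w fun w ih => ?_
  rcases w with _ | ⟨a, r⟩
  · exact nil
  · refine cons a r (ih r ?_) fun x hx => ih (x ++ r) ?_
    · simpa [InvImage] using Multiset.isDershowitzMannaLT_add_cons (M := r.map rank) (N := 0)
        (o := rank a) (by simp)
    · simpa [InvImage] using Multiset.isDershowitzMannaLT_add_cons (M := r.map rank)
        (o := rank a) (N := x.map rank) (by simpa using hrank a x hx)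

open Classical in
noncomputable def safeCallStep (G : CFGame A) (q : G.Q) (b : A) : Option G.Q :=
  if G.CallSafe q b then none else some (G.T.step q b)

open Classical in
noncomputable def safeCallStrategy (G : CFGame A) : JStrat A := fun α b =>
  if List.foldl (optStep G.safeCallStep) (some G.T.start) (flat α ++ [b]) = none then
    JMove.call
  else JMove.read

lemma stronglyRegular_safeCallStrategy : G.StronglyRegular G.safeCallStrategy := by
  classical
  refine ⟨G.safeCallStep, fun q b => ?_, fun α b _ => ?_⟩
  · by_cases h : G.CallSafe q b <;> simp [safeCallStep, h]
  · by_cases h : List.foldl (optStep G.safeCallStep) (some G.T.start) (flat α ++ [b]) = none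
      <;> simp [safeCallStrategy, h]

lemma foldl_safeCallStep {q : G.Q} {y : List A} (hy : G.NoSafeCall q y) :
    List.foldl (optStep G.safeCallStep) (some q) y = some (G.T.evalFrom q y) := by
  induction y generalizing q with
  | nil => rfl
  | cons a y ih =>
    simp only [NoSafeCall] at hy
    simp [optStep, safeCallStep, hy.1, ih hy.2]

lemma safeCallStrategy_eq_call_iff {α : List (HSym A)} {b : A}
    (hα : G.NoSafeCall G.T.start (flat α)) :
    G.safeCallStrategy α b = JMove.call ↔ G.CallSafe (G.T.evalFrom G.T.start (flat α)) b := by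
  classical
  by_cases h : G.CallSafe (G.T.evalFrom G.T.start (flat α)) b <;>
    simp [safeCallStrategy, List.foldl_append, foldl_safeCallStep hα, optStep, safeCallStep, h]

lemma Dominant.forces_safeCallStrategy [Finite A] (hnr : G.NonRecursive) (hd : G.Dominant σd)
    (w : List A) : ∀ α : List (HSym A), G.NoSafeCall G.T.start (flat α) →
      G.Winnable (G.T.evalFrom G.T.start (flat α)) w →
      G.Forces (subStrat G.safeCallStrategy α) w
        (fun β => G.T.evalFrom G.T.start (flat (α ++ β)) ∈ G.T.accept) := by
  induction w using hnr.induction with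
  | nil =>
    intro α _ hw
    simpa [forces_nil] using mem_accept_of_winnable_nil hw
  | cons a r ihr ihx =>
    intro α hα hw
    by_cases hsafe : G.CallSafe (G.T.evalFrom G.T.start (flat α)) a
    · have hcall : subStrat G.safeCallStrategy α [] a = JMove.call := by
        simpa [subStrat] using (safeCallStrategy_eq_call_iff hα).mpr hsafe
      refine (forces_cons_of_call hsafe.1 hcall).mpr fun x hx => ?_
      have h := ihx x hx (α ++ [Sum.inr a]) (by simpa using hα)
        (by simpa using hsafe.2 r x hw hx)
      rw [subStrat_append] at h
      simpa using h
    · have hread : ¬ (G.Fn a ∧ subStrat G.safeCallStrategy α [] a = JMove.call) := by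
        simpa [subStrat, safeCallStrategy_eq_call_iff hα] using fun _ => hsafe
      refine (forces_cons_of_read hread).mpr ?_
      have h := ihr (α ++ [Sum.inl a])
        (by simpa using noSafeCall_append_singleton.mpr ⟨hα, hsafe⟩)
        (by simpa using hd.winnable_of_not_callSafe hα hsafe hw)
      rw [subStrat_append] at h
      simpa using h

end CFGame

theorem statement5 {A : Type} [Fintype A] (G : CFGame A)
    (hnr : G.NonRecursive)
    (hdom : ∃ σ : JStrat A, G.Dominant σ) :
    ∃ σ : JStrat A, G.StronglyRegular σ ∧ G.Dominant σ := by
  obtain ⟨σd, hd⟩ := hdom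
  refine ⟨G.safeCallStrategy, G.stronglyRegular_safeCallStrategy, fun σ w hw => ?_⟩
  have hwin : G.Winnable G.T.start w := ⟨σ, CFGame.winsOn_iff_winsFrom.mp hw⟩
  exact CFGame.winsOn_iff_winsFrom.mpr
    (hd.forces_safeCallStrategy hnr w [] trivial (by simpa using hwin))

end CFG
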